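/- For every κ ≥ 1 and E ≥ 0, the quantity f(κ,E) = g((κ − 1/2)E + κ − 1) − g(E/2) − ln(2κ − 1) satisfies 0 ≤ f(κ,E) ≤ ln(e/2) = 1 − ln 2. -/

import Mathlib

/-!
With `φ x = gapPotential x = g x - log (2x + 1)` and `X = (κ - 1/2) E + κ - 1`, the identity
`2X + 1 = (2κ - 1)(E + 1)` turns the gap into `φ X - φ (E/2)`, where `0 ≤ E/2 ≤ X`.
Now `φ' x = log (1 + 1/x) - 2/(2x + 1) ≥ 0` (the first term of the artanh series of the
logarithm), so `φ` is monotone on `[0, ∞)`, with `φ 0 = 0` and `φ x → 1 - log 2`.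
Hence `0 ≤ φ X - φ (E/2) ≤ φ X - φ 0 ≤ 1 - log 2`.
-/

noncomputable def g (x : ℝ) : ℝ := (x + 1) * Real.log (x + 1) - x * Real.log x

open Real Filter Topology Set

/-- The first term of `log (1 + a⁻¹) = ∑ₖ 2 / ((2k + 1) (2a + 1) ^ (2k + 1))`. -/
theorem two_div_two_mul_add_one_le_log_one_add_inv {a : ℝ} (ha : 0 < a) :
    2 / (2 * a + 1) ≤ log (1 + a⁻¹) := by
  have hterm : ∀ k : ℕ, 0 ≤ (2 : ℝ) * (1 / (2 * k + 1)) * (1 / (2 * a + 1)) ^ (2 * k + 1) :=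
    fun k => by positivity
  simpa [div_eq_mul_inv] using le_hasSum (hasSum_log_one_add_inv ha) 0 fun k _ => hterm k

theorem hasDerivAt_g {x : ℝ} (hx : 0 < x) : HasDerivAt g (log (1 + x⁻¹)) x := by
  have hx1 : x + 1 ≠ 0 := by positivity
  have h : HasDerivAt (fun y => (y + 1) * log (y + 1) - y * log y)
      (log (x + 1) + 1 - (log x + 1)) x :=
    (hasDerivAt_mul_log hx1).comp_add_const.sub (hasDerivAt_mul_log hx.ne')
  refine h.congr_deriv ?_
  rw [add_sub_add_right_eq_sub, ← log_div hx1 hx.ne', add_div, div_self hx.ne', one_div]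

theorem continuous_g : Continuous g := by
  unfold g; fun_prop

noncomputable def gapPotential (x : ℝ) : ℝ := g x - log (2 * x + 1)

theorem hasDerivAt_gapPotential {x : ℝ} (hx : 0 < x) :
    HasDerivAt gapPotential (log (1 + x⁻¹) - 2 / (2 * x + 1)) x := by
  have hlin : HasDerivAt (fun y : ℝ => 2 * y + 1) 2 x := by
    simpa using ((hasDerivAt_id x).const_mul 2).add_const 1
  exact (hasDerivAt_g hx).sub (hlin.log (by positivity))

theorem gapPotential_monotoneOn : MonotoneOn gapPotential (Ici 0) := by
  have hcont : ContinuousOn gapPotential (Ici 0) := by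
    refine continuous_g.continuousOn.sub (ContinuousOn.log (by fun_prop) fun x hx => ?_)
    have : (0 : ℝ) ≤ x := hx
    positivity
  refine monotoneOn_of_hasDerivWithinAt_nonneg (convex_Ici 0) hcont
    (fun x hx => (hasDerivAt_gapPotential (interior_Ici.subset hx)).hasDerivWithinAt) fun x hx => ?_
  rw [interior_Ici] at hx
  exact sub_nonneg.2 (two_div_two_mul_add_one_le_log_one_add_inv hx)

theorem gapPotential_eq {x : ℝ} (hx : 0 < x) :
    gapPotential x = x * log (1 + 1 / x) + log (1 + x⁻¹) - log (2 + x⁻¹) := by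
  have hx1 : x + 1 ≠ 0 := by positivity
  have hx2 : 2 * x + 1 ≠ 0 := by positivity
  rw [show 1 + 1 / x = (x + 1) / x by field_simp, show 1 + x⁻¹ = (x + 1) / x by field_simp,
    show 2 + x⁻¹ = (2 * x + 1) / x by field_simp, log_div hx1 hx.ne', log_div hx2 hx.ne']
  unfold gapPotential g
  ring

theorem tendsto_gapPotential_atTop : Tendsto gapPotential atTop (𝓝 (1 - log 2)) := by
  have h := ((tendsto_mul_log_one_add_div_atTop 1).add
    ((tendsto_inv_atTop_zero.const_add 1).log (by norm_num))).sub
    ((tendsto_inv_atTop_zero.const_add 2).log (by norm_num))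
  rw [add_zero, add_zero, log_one, add_zero] at h
  exact h.congr' <| (eventually_gt_atTop 0).mono fun x hx => (gapPotential_eq hx).symm

theorem gapPotential_le {x : ℝ} (hx : 0 ≤ x) : gapPotential x ≤ 1 - log 2 :=
  ge_of_tendsto tendsto_gapPotential_atTop <| (eventually_ge_atTop x).mono fun _ hy =>
    gapPotential_monotoneOn hx (hx.trans hy) hy

theorem gapPotential_zero : gapPotential 0 = 0 := by
  simp [gapPotential, g]

theorem gap_eq_gapPotential_sub {κ E : ℝ} (hκ : 2 * κ - 1 ≠ 0) (hE : E + 1 ≠ 0) :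
    g ((κ - 1 / 2) * E + κ - 1) - g (E / 2) - log (2 * κ - 1) =
      gapPotential ((κ - 1 / 2) * E + κ - 1) - gapPotential (E / 2) := by
  have hprod : 2 * ((κ - 1 / 2) * E + κ - 1) + 1 = (2 * κ - 1) * (E + 1) := by ring
  unfold gapPotential
  rw [hprod, log_mul hκ hE, show 2 * (E / 2) + 1 = E + 1 by ring]
  ring

/-- for `κ ≥ 1` and `E ≥ 0`, the gap
`f(κ,E) = g((κ−1/2)E + κ−1) − g(E/2) − ln(2κ−1)` satisfies
`0 ≤ f(κ,E) ≤ ln(e/2) = 1 − ln 2`. -/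
theorem gap_bounds (κ E : ℝ) (hκ : 1 ≤ κ) (hE : 0 ≤ E) :
    0 ≤ g ((κ - 1 / 2) * E + κ - 1) - g (E / 2) - Real.log (2 * κ - 1) ∧
    g ((κ - 1 / 2) * E + κ - 1) - g (E / 2) - Real.log (2 * κ - 1) ≤ 1 - Real.log 2 := by
  rw [gap_eq_gapPotential_sub (by linarith) (by linarith)]
  have ht : (0 : ℝ) ≤ E / 2 := by positivity
  have htX : E / 2 ≤ (κ - 1 / 2) * E + κ - 1 := by nlinarith
  have hmono := gapPotential_monotoneOn (mem_Ici.2 ht) (mem_Ici.2 (ht.trans htX)) htX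
  have hpos := gapPotential_monotoneOn (mem_Ici.2 le_rfl) (mem_Ici.2 ht) ht
  rw [gapPotential_zero] at hpos
  constructor
  · linarith
  · linarith [gapPotential_le (ht.trans htX)]
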